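/- Let U = U_k V_k ⋯ U_1 V_1 U_0 be a product of unitaries on (ℂ²)^{⊗m}, where each U_i is incoherent and each V_i is a generalized controlled-Hadamard. Then for every nonzero vector ψ ∈ (ℂ²)^{⊗m}, the coherence rank satisfies χ(ψ)/2^k ≤ χ(Uψ) ≤ 2^k·χ(ψ). -/

import Mathlib

open Matrix Complex
open scoped Kronecker Classical ComplexOrder

noncomputable section

/-- A matrix is *incoherent* (w.r.t. the computational basis) if it has the form
`Σ_x e^{iθ_x} |π(x)⟩⟨x|` for a permutation `π` and real phases `θ`. -/
def IsIncoherent {d : Type*} [Fintype d] [DecidableEq d] (U : Matrix d d ℂ) : Prop :=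
  ∃ (π : Equiv.Perm d) (θ : d → ℝ),
    U = Matrix.of fun i j => if i = π j then Complex.exp ((θ j : ℂ) * Complex.I) else 0

/-- The dephasing map `Δ`, zeroing all off-diagonal entries. -/
def dephase {d : Type*} [DecidableEq d] (ρ : Matrix d d ℂ) : Matrix d d ℂ :=
  Matrix.of fun i j => if i = j then ρ i j else 0

/-- Partial trace over the second tensor factor. -/
def ptrace2 {α β : Type*} [Fintype β] (A : Matrix (α × β) (α × β) ℂ) : Matrix α α ℂ :=
  Matrix.of fun i i' => ∑ j, A (i, j) (i', j)

/-- Partial trace over the first tensor factor. -/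
def ptrace1 {α β : Type*} [Fintype α] (A : Matrix (α × β) (α × β) ℂ) : Matrix β β ℂ :=
  Matrix.of fun j j' => ∑ i, A (i, j) (i, j')

/-- A quantum state: positive semidefinite matrix of trace one. -/
def IsState {d : Type*} [Fintype d] (ρ : Matrix d d ℂ) : Prop :=
  ρ.PosSemidef ∧ ρ.trace = 1

/-- The Choi matrix of a linear map between matrix algebras. -/
def choiMatrix {a b : Type*} [Fintype a] [DecidableEq a] [Fintype b]
    (E : Matrix a a ℂ →ₗ[ℂ] Matrix b b ℂ) : Matrix (a × b) (a × b) ℂ :=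
  Matrix.of fun p q => E (Matrix.single p.1 q.1 1) p.2 q.2

/-- A quantum channel: completely positive (PSD Choi matrix) trace-preserving linear map. -/
def IsChannel {a b : Type*} [Fintype a] [DecidableEq a] [Fintype b] [DecidableEq b]
    (E : Matrix a a ℂ →ₗ[ℂ] Matrix b b ℂ) : Prop :=
  (choiMatrix E).PosSemidef ∧ ∀ ρ, (E ρ).trace = ρ.trace

/-- The old Mathlib `Matrix.PosSemidef.sqrt` (removed since), with its old definition. -/
def psdSqrt {d : Type*} [Fintype d] [DecidableEq d] {A : Matrix d d ℂ} (hA : A.PosSemidef) :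
    Matrix d d ℂ :=
  (hA.1.eigenvectorUnitary : Matrix d d ℂ) * diagonal ((↑) ∘ Real.sqrt ∘ hA.1.eigenvalues) *
    (star hA.1.eigenvectorUnitary : Matrix d d ℂ)

/-- The trace norm `‖M‖₁ = Tr √(M†M)`. -/
def traceNorm {d : Type*} [Fintype d] [DecidableEq d] (M : Matrix d d ℂ) : ℝ :=
  ((psdSqrt (Matrix.posSemidef_conjTranspose_mul_self M)).trace).re

/-- The trace distance `D(ρ,σ) = ½‖ρ−σ‖₁`. -/
def traceDist {d : Type*} [Fintype d] [DecidableEq d] (ρ σ : Matrix d d ℂ) : ℝ :=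
  traceNorm (ρ - σ) / 2

/-- The coherence rank of a vector: the number of nonzero coordinates. -/
def cohRank {d : Type*} [Fintype d] (ψ : d → ℂ) : ℕ :=
  (Finset.univ.filter fun x => ψ x ≠ 0).card

/-- The Hadamard gate. -/
def Hmat : Matrix (Fin 2) (Fin 2) ℂ :=
  Matrix.of fun a b => (((Real.sqrt 2)⁻¹ : ℝ) : ℂ) * (if a = 1 ∧ b = 1 then -1 else 1)

/-- `H^{⊗n}`, the n-fold Kronecker power of the Hadamard gate. -/
def Hpow (n : ℕ) : Matrix (Fin n → Fin 2) (Fin n → Fin 2) ℂ :=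
  Matrix.of fun i j => ∏ q, Hmat (i q) (j q)

/-- A generalized controlled-Hadamard on qubits indexed by `I`: for some target qubit `t`
and set `S` of configurations of the other qubits, apply `H` on qubit `t` controlled on the
other qubits being in `S`. -/
def IsCtrlHadamard {I : Type*} [Fintype I] [DecidableEq I]
    (V : Matrix (I → Fin 2) (I → Fin 2) ℂ) : Prop :=
  ∃ (t : I) (S : Finset ({i : I // i ≠ t} → Fin 2)),
    V = Matrix.of fun a b =>
      if (fun i : {i : I // i ≠ t} => b i.1) ∈ S then
        (if ∀ i, i ≠ t → a i = b i then Hmat (a t) (b t) else 0)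
      else (if a = b then (1 : ℂ) else 0)

/-- The alternating product `U_k * V_k * ⋯ * U_1 * V_1 * U_0`. -/
def altProd {X : Type*} [Monoid X] : (k : ℕ) → (Fin (k + 1) → X) → (Fin k → X) → X
  | 0, Us, _ => Us 0
  | (k + 1), Us, Vs =>
      Us (Fin.last (k + 1)) * Vs (Fin.last k) *
        altProd k (fun i => Us i.castSucc) (fun i => Vs i.castSucc)

lemma cohRank_incoherent {d : Type*} [Fintype d] [DecidableEq d] {U : Matrix d d ℂ}
    (h : IsIncoherent U) (ψ : d → ℂ) : cohRank (U.mulVec ψ) = cohRank ψ := by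
  obtain ⟨π, θ, rfl⟩ := h
  have hv : ∀ i, (Matrix.of fun i j => if i = π j then Complex.exp ((θ j : ℂ) * Complex.I) else 0).mulVec ψ i
      = Complex.exp ((θ (π.symm i) : ℂ) * Complex.I) * ψ (π.symm i) := by
    intro i
    simp only [Matrix.mulVec, dotProduct, Matrix.of_apply, ite_mul, zero_mul]
    rw [Finset.sum_eq_single (π.symm i)]
    · simp
    · intro j _ hj
      rw [if_neg]
      intro he
      exact hj (by rw [he]; simp)
    · simp
  unfold cohRank
  have hset : (Finset.univ.filter fun i =>
      (Matrix.of fun i j => if i = π j then Complex.exp ((θ j : ℂ) * Complex.I) else 0).mulVec ψ i ≠ 0)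
      = (Finset.univ.filter fun x => ψ x ≠ 0).image π := by
    ext i
    simp only [Finset.mem_filter, Finset.mem_image, Finset.mem_univ, true_and, hv,
      mul_ne_zero_iff]
    constructor
    · intro hne; exact ⟨π.symm i, hne.2, by simp⟩
    · rintro ⟨x, hx, rfl⟩
      refine ⟨Complex.exp_ne_zero _, by simpa using hx⟩
  rw [hset, Finset.card_image_of_injective _ π.injective]

lemma fin2_cases (x : Fin 2) : x = 0 ∨ x = 1 := by omega

lemma hmat_sum (x y : Fin 2) :
    Hmat x 0 * Hmat 0 y + Hmat x 1 * Hmat 1 y = if x = y then (1 : ℂ) else 0 := by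
  have h2 : ((Real.sqrt 2 : ℝ) : ℂ) ^ 2 = 2 := by
    rw [← Complex.ofReal_pow, Real.sq_sqrt] <;> norm_num
  fin_cases x <;> fin_cases y <;> simp [Hmat] <;> ring_nf <;>
    rw [inv_pow, h2] <;> norm_num

lemma ctrl_sq {I : Type*} [Fintype I] [DecidableEq I] {V : Matrix (I → Fin 2) (I → Fin 2) ℂ}
    (h : IsCtrlHadamard V) : V * V = 1 := by
  obtain ⟨t, S, hV⟩ := h
  have hzero : ∀ a b, ¬ (∀ i, i ≠ t → a i = b i) → V a b = 0 := by
    intro a b hab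
    rw [hV]
    simp only [Matrix.of_apply, hab, if_false]
    have : a ≠ b := fun he => hab (fun i _ => by rw [he])
    simp [this]
  have hone : ∀ a b : I → Fin 2, (∀ i, i ≠ t → a i = b i) → V a b =
      if (fun i : {i : I // i ≠ t} => b i.1) ∈ S then Hmat (a t) (b t)
      else if a = b then 1 else 0 := by
    intro a b hab
    rw [hV]
    simp only [Matrix.of_apply]
    split_ifs with h1 h2 <;> first | rfl | exact absurd hab h2
  ext a c
  rw [Matrix.mul_apply]
  have hagree : ∀ b : I → Fin 2, (∀ i, i ≠ t → b i = c i) →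
      ((fun i : {i : I // i ≠ t} => b i.1) ∈ S ↔ (fun i : {i : I // i ≠ t} => c i.1) ∈ S) := by
    intro b hb
    have : (fun i : {i : I // i ≠ t} => b i.1) = (fun i : {i : I // i ≠ t} => c i.1) := by
      funext i; exact hb i.1 i.2
    rw [this]
  by_cases hq : ∀ i, i ≠ t → a i = c i
  · -- only terms with b agreeing with c off t survive
    have hne01 : Function.update c t 0 ≠ Function.update c t (1 : Fin 2) := by
      intro he
      have := congrFun he t
      simp at this
    rw [← Finset.sum_subset (Finset.subset_univ
        ({Function.update c t 0, Function.update c t 1} : Finset (I → Fin 2)))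
        (fun b _ hb => ?_)]
    swap
    · -- terms outside vanish
      simp only [Finset.mem_insert, Finset.mem_singleton] at hb
      push_neg at hb
      have hbc : ¬ ∀ i, i ≠ t → b i = c i := by
        intro hbc
        have hbu : b = Function.update c t (b t) := by
          funext i
          by_cases hi : i = t
          · subst hi; simp
          · simp [Function.update, hi, hbc i hi]
        rcases fin2_cases (b t) with h1 | h1 <;> rw [h1] at hbu
        · exact hb.1 hbu
        · exact hb.2 hbu
      rw [hzero b c hbc, mul_zero]
    · -- sum over the two updates
      have hupd : ∀ x : Fin 2, ∀ i, i ≠ t → Function.update c t x i = c i := by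
        intro x i hi; simp [Function.update, hi]
      have haupd : ∀ x : Fin 2, ∀ i, i ≠ t → a i = Function.update c t x i := by
        intro x i hi; rw [hupd x i hi]; exact hq i hi
      rw [Finset.sum_pair hne01]
      rw [hone a _ (haupd 0), hone _ c (hupd 0), hone a _ (haupd 1), hone _ c (hupd 1)]
      by_cases hc : (fun i : {i : I // i ≠ t} => c i.1) ∈ S
      · have hc0 : (fun i : {i : I // i ≠ t} => Function.update c t 0 i.1) ∈ S := by
          rw [hagree _ (hupd 0)]; exact hc
        have hc1 : (fun i : {i : I // i ≠ t} => Function.update c t 1 i.1) ∈ S := by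
          rw [hagree _ (hupd 1)]; exact hc
        simp only [hc0, hc1, hc, if_true, Function.update_self]
        rw [hmat_sum]
        have hac : a = c ↔ a t = c t := by
          constructor
          · intro he; rw [he]
          · intro he; funext i; by_cases hi : i = t
            · subst hi; exact he
            · exact hq i hi
        rw [Matrix.one_apply]
        by_cases he : a t = c t <;> simp [hac, he]
      · have hc0 : (fun i : {i : I // i ≠ t} => Function.update c t 0 i.1) ∉ S := by
          rw [hagree _ (hupd 0)]; exact hc
        have hc1 : (fun i : {i : I // i ≠ t} => Function.update c t 1 i.1) ∉ S := by
          rw [hagree _ (hupd 1)]; exact hc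
        simp only [hc0, hc1, hc, if_false]
        have hb0 : Function.update c t 0 = c ↔ c t = 0 := by
          constructor
          · intro he; rw [← he]; simp
          · intro he; funext i; by_cases hi : i = t
            · subst hi; simp [he]
            · simp [Function.update, hi]
        have hb1 : Function.update c t 1 = c ↔ c t = 1 := by
          constructor
          · intro he; rw [← he]; simp
          · intro he; funext i; by_cases hi : i = t
            · subst hi; simp [he]
            · simp [Function.update, hi]
        have ha0 : a = Function.update c t 0 ↔ a t = 0 := by
          constructor
          · intro he; rw [he]; simp
          · intro he; funext i; by_cases hi : i = t
            · subst hi; simp [he]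
            · simp [Function.update, hi, hq i hi]
        have ha1 : a = Function.update c t 1 ↔ a t = 1 := by
          constructor
          · intro he; rw [he]; simp
          · intro he; funext i; by_cases hi : i = t
            · subst hi; simp [he]
            · simp [Function.update, hi, hq i hi]
        have hac : a = c ↔ a t = c t := by
          constructor
          · intro he; rw [he]
          · intro he; funext i; by_cases hi : i = t
            · subst hi; exact he
            · exact hq i hi
        rw [Matrix.one_apply]
        rcases fin2_cases (a t) with hx | hx <;> rcases fin2_cases (c t) with hy | hy <;>
          simp [ha0, ha1, hb0, hb1, hac, hx, hy]
  · -- a doesn't agree with c off t: all terms vanish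
    rw [Matrix.one_apply, if_neg (fun he => hq (fun i _ => by rw [he]))]
    refine Finset.sum_eq_zero fun b _ => ?_
    by_cases hab : ∀ i, i ≠ t → a i = b i
    · have hbc : ¬ ∀ i, i ≠ t → b i = c i := by
        intro hbc
        exact hq fun i hi => (hab i hi).trans (hbc i hi)
      rw [hzero b c hbc, mul_zero]
    · rw [hzero a b hab, zero_mul]

lemma cohRank_ctrl_le {I : Type*} [Fintype I] [DecidableEq I] {V : Matrix (I → Fin 2) (I → Fin 2) ℂ}
    (h : IsCtrlHadamard V) (ψ : (I → Fin 2) → ℂ) :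
    cohRank (V.mulVec ψ) ≤ 2 * cohRank ψ := by
  obtain ⟨t, S, hV⟩ := h
  have hzero : ∀ a b, ¬ (∀ i, i ≠ t → a i = b i) → V a b = 0 := by
    intro a b hab
    rw [hV]
    simp only [Matrix.of_apply, hab, if_false]
    have : a ≠ b := fun he => hab (fun i _ => by rw [he])
    simp [this]
  have hsub : (Finset.univ.filter fun a => V.mulVec ψ a ≠ 0) ⊆
      (Finset.univ.filter fun b => ψ b ≠ 0).biUnion
        (fun b => Finset.image (fun x : Fin 2 => Function.update b t x) Finset.univ) := by
    intro a ha
    simp only [Finset.mem_filter, Finset.mem_univ, true_and] at ha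
    obtain ⟨b, _, hb⟩ : ∃ b ∈ Finset.univ, V a b * ψ b ≠ 0 := by
      by_contra hcon
      push_neg at hcon
      exact ha (Finset.sum_eq_zero hcon)
    have hVab : V a b ≠ 0 := fun he => hb (by rw [he, zero_mul])
    have hψb : ψ b ≠ 0 := fun he => hb (by rw [he, mul_zero])
    have hab : ∀ i, i ≠ t → a i = b i := by
      by_contra hcon
      exact hVab (hzero a b hcon)
    have : a = Function.update b t (a t) := by
      funext i
      by_cases hi : i = t
      · subst hi; simp
      · simp [Function.update, hi, hab i hi]
    simp only [Finset.mem_biUnion, Finset.mem_filter, Finset.mem_univ, true_and,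
      Finset.mem_image]
    exact ⟨b, hψb, a t, this.symm⟩
  calc cohRank (V.mulVec ψ) ≤ _ := Finset.card_le_card hsub
    _ ≤ ∑ b ∈ Finset.univ.filter fun b => ψ b ≠ 0,
        (Finset.image (fun x : Fin 2 => Function.update b t x) Finset.univ).card :=
      Finset.card_biUnion_le
    _ ≤ ∑ _b ∈ Finset.univ.filter fun b => ψ b ≠ 0, 2 := by
      refine Finset.sum_le_sum fun b _ => ?_
      exact (Finset.card_image_le).trans (by simp)
    _ = 2 * cohRank ψ := by
      rw [Finset.sum_const, smul_eq_mul, mul_comm]; rfl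

lemma cohRank_ctrl_ge {I : Type*} [Fintype I] [DecidableEq I] {V : Matrix (I → Fin 2) (I → Fin 2) ℂ}
    (h : IsCtrlHadamard V) (ψ : (I → Fin 2) → ℂ) :
    cohRank ψ ≤ 2 * cohRank (V.mulVec ψ) := by
  have : ψ = V.mulVec (V.mulVec ψ) := by
    rw [Matrix.mulVec_mulVec, ctrl_sq h, Matrix.one_mulVec]
  conv_lhs => rw [this]
  exact cohRank_ctrl_le h _

lemma altProd_cohRank_aux (m k : ℕ)
    (Us : Fin (k + 1) → Matrix (Fin m → Fin 2) (Fin m → Fin 2) ℂ)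
    (Vs : Fin k → Matrix (Fin m → Fin 2) (Fin m → Fin 2) ℂ)
    (hUs : ∀ i, IsIncoherent (Us i)) (hVs : ∀ i, IsCtrlHadamard (Vs i))
    (ψ : (Fin m → Fin 2) → ℂ) :
    cohRank ((altProd k Us Vs).mulVec ψ) ≤ 2 ^ k * cohRank ψ ∧
    cohRank ψ ≤ 2 ^ k * cohRank ((altProd k Us Vs).mulVec ψ) := by
  induction k generalizing ψ with
  | zero =>
    simp only [altProd, pow_zero, one_mul]
    rw [cohRank_incoherent (hUs 0)]
    exact ⟨le_refl _, le_refl _⟩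
  | succ k ih =>
    set W := altProd k (fun i => Us i.castSucc) (fun i => Vs i.castSucc) with hW
    have hUV : (altProd (k + 1) Us Vs).mulVec ψ =
        (Us (Fin.last (k + 1))).mulVec ((Vs (Fin.last k)).mulVec (W.mulVec ψ)) := by
      rw [Matrix.mulVec_mulVec, Matrix.mulVec_mulVec]
      rfl
    obtain ⟨ih1, ih2⟩ := ih (fun i => Us i.castSucc) (fun i => Vs i.castSucc)
      (fun i => hUs i.castSucc) (fun i => hVs i.castSucc) ψ
    set φ := W.mulVec ψ with hφ
    rw [hUV, cohRank_incoherent (hUs (Fin.last (k + 1)))]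
    constructor
    · calc cohRank ((Vs (Fin.last k)).mulVec φ) ≤ 2 * cohRank φ :=
            cohRank_ctrl_le (hVs (Fin.last k)) φ
        _ ≤ 2 * (2 ^ k * cohRank ψ) := by omega
        _ = 2 ^ (k + 1) * cohRank ψ := by ring
    · calc cohRank ψ ≤ 2 ^ k * cohRank φ := ih2
        _ ≤ 2 ^ k * (2 * cohRank ((Vs (Fin.last k)).mulVec φ)) := by
            have := cohRank_ctrl_ge (hVs (Fin.last k)) φ
            exact Nat.mul_le_mul_left _ this
        _ = 2 ^ (k + 1) * cohRank ((Vs (Fin.last k)).mulVec φ) := by ring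


/-- For `U = U_k V_k ⋯ U_1 V_1 U_0` with `U_i` incoherent and `V_i` generalized
controlled-Hadamards, `χ(ψ)/2^k ≤ χ(Uψ) ≤ 2^k χ(ψ)` for every nonzero `ψ`. -/
theorem altProd_cohRank_bounds (m k : ℕ)
    (Us : Fin (k + 1) → Matrix (Fin m → Fin 2) (Fin m → Fin 2) ℂ)
    (Vs : Fin k → Matrix (Fin m → Fin 2) (Fin m → Fin 2) ℂ)
    (hUs : ∀ i, IsIncoherent (Us i)) (hVs : ∀ i, IsCtrlHadamard (Vs i))
    (U : Matrix (Fin m → Fin 2) (Fin m → Fin 2) ℂ) (hU : U = altProd k Us Vs)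
    (ψ : (Fin m → Fin 2) → ℂ) (hψ : ψ ≠ 0) :
    (cohRank ψ : ℝ) / 2 ^ k ≤ (cohRank (U.mulVec ψ) : ℝ) ∧
    (cohRank (U.mulVec ψ) : ℝ) ≤ 2 ^ k * (cohRank ψ : ℝ) := by

  subst hU
  obtain ⟨h1, h2⟩ := altProd_cohRank_aux m k Us Vs hUs hVs ψ
  constructor
  · rw [div_le_iff₀ (by positivity)]
    calc (cohRank ψ : ℝ) ≤ (2 ^ k * cohRank ((altProd k Us Vs).mulVec ψ) : ℕ) := by
          exact_mod_cast h2
      _ = (cohRank ((altProd k Us Vs).mulVec ψ) : ℝ) * 2 ^ k := by push_cast; ring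
  · calc (cohRank ((altProd k Us Vs).mulVec ψ) : ℝ) ≤ ((2 ^ k * cohRank ψ : ℕ) : ℝ) := by
          exact_mod_cast h1
      _ = 2 ^ k * (cohRank ψ : ℝ) := by push_cast; ring
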